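/- (Representer theorem) Let H be an RKHS over a set S with kernel k̃, let t₁,…,tₙ ∈ S, let R : ℝⁿ → ℝ be any function, and let Ω : ℝ≥0 → ℝ be strictly increasing. Then any minimizer h* of J(h) = R(h(t₁),…,h(tₙ)) + Ω(‖h‖_H) over H lies in span{k̃(t_i,·) : i = 1,…,n}, i.e., h* = ∑_{i=1}^n α_i k̃(t_i,·) for some α ∈ ℝⁿ. -/

import Mathlib

/-- Representer theorem: any minimizer of
`J h = R (h(t₁),…,h(tₙ)) + Ω ‖h‖` over an RKHS lies in the span of the kernel
sections `k̃(tᵢ, ·)`, i.e. `h* = ∑ αᵢ k̃(tᵢ, ·)`. -/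
theorem representer_theorem {H : Type*} [NormedAddCommGroup H]
    [InnerProductSpace ℝ H] [CompleteSpace H] {S : Type*}
    (K : S → H) (ev : H → S → ℝ)
    (hrepr : ∀ (h : H) (t : S), ev h t = inner ℝ h (K t))
    (n : ℕ) (t : Fin n → S)
    (R : (Fin n → ℝ) → ℝ) (Ω : ℝ → ℝ) (hΩ : StrictMonoOn Ω (Set.Ici 0))
    (hstar : H)
    (hmin : ∀ h : H, R (fun i => ev hstar (t i)) + Ω ‖hstar‖
      ≤ R (fun i => ev h (t i)) + Ω ‖h‖) :
    ∃ α : Fin n → ℝ, hstar = ∑ i, α i • K (t i) := by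
  set V : Submodule ℝ H := Submodule.span ℝ (Set.range fun i => K (t i)) with hV
  haveI : FiniteDimensional ℝ V := FiniteDimensional.span_of_finite ℝ (Set.finite_range _)
  haveI : CompleteSpace V := FiniteDimensional.complete ℝ V
  set v : H := (V.orthogonalProjectionOnto hstar : H) with hv
  set w : H := hstar - v with hw
  have hwmem : w ∈ Vᗮ := V.sub_starProjection_mem_orthogonal hstar
  have hKmem : ∀ i, K (t i) ∈ V := fun i =>
    Submodule.subset_span ⟨i, rfl⟩
  have hinner : ∀ i, (inner ℝ w (K (t i)) : ℝ) = 0 := fun i =>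
    (Submodule.mem_orthogonal' V w).mp hwmem _ (hKmem i)
  have hev : ∀ i, ev v (t i) = ev hstar (t i) := by
    intro i
    rw [hrepr, hrepr]
    have : hstar = v + w := by rw [hw]; abel
    rw [this, inner_add_left, hinner i, add_zero]
  have hR : (fun i => ev v (t i)) = fun i => ev hstar (t i) := funext hev
  have hΩle : Ω ‖hstar‖ ≤ Ω ‖v‖ := by
    have := hmin v
    rw [hR] at this
    linarith
  have hnle : ‖hstar‖ ≤ ‖v‖ := by
    by_contra hlt
    push_neg at hlt
    exact absurd hΩle (not_le.mpr (hΩ (norm_nonneg _) (norm_nonneg _) hlt))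
  have hvw : (inner ℝ v w : ℝ) = 0 := by
    have hvmem : v ∈ V := (V.orthogonalProjectionOnto hstar).2
    have := (Submodule.mem_orthogonal V w).mp hwmem v hvmem
    exact this
  have hnormsq : ‖hstar‖ ^ 2 = ‖v‖ ^ 2 + ‖w‖ ^ 2 := by
    have : hstar = v + w := by rw [hw]; abel
    rw [this, norm_add_sq_real, hvw]
    ring
  have hw0 : w = 0 := by
    have h1 : ‖v‖ ^ 2 + ‖w‖ ^ 2 ≤ ‖v‖ ^ 2 := by
      rw [← hnormsq]
      have := pow_le_pow_left₀ (norm_nonneg hstar) hnle 2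
      linarith
    have : ‖w‖ = 0 := by nlinarith [sq_nonneg ‖w‖, norm_nonneg w]
    exact norm_eq_zero.mp this
  have hsv : hstar = v := by
    have := hw0
    rw [hw, sub_eq_zero] at this
    exact this
  have hmemV : hstar ∈ V := hsv ▸ (V.orthogonalProjectionOnto hstar).2
  rw [hV, Submodule.mem_span_range_iff_exists_fun] at hmemV
  obtain ⟨α, hα⟩ := hmemV
  exact ⟨α, hα.symm⟩
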